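/- arXiv:2310.12269 — 3 statements merged into one kernel-verified Lean document; each statement's English description precedes it below -/
import Mathlib

section
/- Let M' be a stable matching in the six-copy duplicated instance and M its projection, and let N be any matching with e=(u,w)∈N where both u and w are matched in M'. If both M'(M(u)) and M'(M(w)) are copies of type a, b, or c, then the γ-votes of u and w comparing M to N sum to at least 0. -/
open Finset
open scoped Classical
noncomputable section

/-- A bipartite preference instance: bipartite (multi)graph `G=(U,W;E)` where each
edge `e` has endpoints `src e ∈ U`, `dst e ∈ W`, and every vertex has a preference
valuation over edges (only values on incident edges are relevant); the valuation of
being unmatched (`∅`) is `0`. -/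
structure PrefInst (U W E : Type) where
  src : E → U
  dst : E → W
  pU : U → E → ℝ
  pW : W → E → ℝ

namespace PrefInst

variable {U W E : Type} [DecidableEq U] [DecidableEq W] [DecidableEq E]

/-- `M` is a matching: no two distinct edges of `M` share an endpoint. -/
def IsMatching (I : PrefInst U W E) (M : Finset E) : Prop :=
  ∀ e ∈ M, ∀ f ∈ M, e ≠ f → I.src e ≠ I.src f ∧ I.dst e ≠ I.dst f

/-- The edge of `M` incident to `u ∈ U` (if any): `M(u)`. -/
def mU (I : PrefInst U W E) (M : Finset E) (u : U) : Option E :=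
  (M.filter fun e => I.src e = u).toList.head?

/-- The edge of `M` incident to `w ∈ W` (if any): `M(w)`. -/
def mW (I : PrefInst U W E) (M : Finset E) (w : W) : Option E :=
  (M.filter fun e => I.dst e = w).toList.head?

/-- Valuation by `u` of a possible partner edge, with `p_u(∅) = 0`. -/
def valU (I : PrefInst U W E) (u : U) : Option E → ℝ
  | none => 0
  | some e => I.pU u e

def valW (I : PrefInst U W E) (w : W) : Option E → ℝ
  | none => 0
  | some e => I.pW w e

/-- `M` is maximal: no edge can be added keeping it a matching. -/
def Maximal (I : PrefInst U W E) (M : Finset E) : Prop :=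
  ∀ e ∉ M, ¬ I.IsMatching (insert e M)

/-- Edge `e ∉ M` blocks `M` in the weak-stability sense: both endpoints strictly improve. -/
def Blocks (I : PrefInst U W E) (M : Finset E) (e : E) : Prop :=
  e ∉ M ∧ I.valU (I.src e) (I.mU M (I.src e)) < I.pU (I.src e) e ∧
    I.valW (I.dst e) (I.mW M (I.dst e)) < I.pW (I.dst e) e

/-- Weak stability: no blocking edge. -/
def WeaklyStable (I : PrefInst U W E) (M : Finset E) : Prop :=
  ∀ e, ¬ I.Blocks M e

/-- Edge `e ∉ M` γ-min blocks `M`: both endpoints improve by at least their γ-threshold. -/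
def GBlocks (I : PrefInst U W E) (γU γW : E → ℝ) (M : Finset E) (e : E) : Prop :=
  e ∉ M ∧ I.valU (I.src e) (I.mU M (I.src e)) + γU e ≤ I.pU (I.src e) e ∧
    I.valW (I.dst e) (I.mW M (I.dst e)) + γW e ≤ I.pW (I.dst e) e

/-- γ-min stability: no γ-min blocking edge. -/
def GMinStable (I : PrefInst U W E) (γU γW : E → ℝ) (M : Finset E) : Prop :=
  ∀ e, ¬ I.GBlocks γU γW M e

/-- Standard vote of `u` comparing `M` to `N`: `+1` if strictly better in `M`,
`-1` if strictly better in `N`, `0` on equal value. -/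
def sVoteU (I : PrefInst U W E) (M N : Finset E) (u : U) : ℤ :=
  if I.valU u (I.mU M u) = I.valU u (I.mU N u) then 0
  else if I.valU u (I.mU M u) < I.valU u (I.mU N u) then -1 else 1

def sVoteW (I : PrefInst U W E) (M N : Finset E) (w : W) : ℤ :=
  if I.valW w (I.mW M w) = I.valW w (I.mW N w) then 0
  else if I.valW w (I.mW M w) < I.valW w (I.mW N w) then -1 else 1

/-- Weak vote of `u`: `0` if same partner, `-1` on strict improvement in `N`,
`+1` otherwise (partner changed without strict improvement). -/
def wVoteU (I : PrefInst U W E) (M N : Finset E) (u : U) : ℤ :=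
  if I.mU M u = I.mU N u then 0
  else if I.valU u (I.mU M u) < I.valU u (I.mU N u) then -1 else 1

def wVoteW (I : PrefInst U W E) (M N : Finset E) (w : W) : ℤ :=
  if I.mW M w = I.mW N w then 0
  else if I.valW w (I.mW M w) < I.valW w (I.mW N w) then -1 else 1

/-- Super vote of `u`: `0` if same partner, `-1` if the new partner is weakly
preferred (and different), `+1` only on strict worsening. -/
def supVoteU (I : PrefInst U W E) (M N : Finset E) (u : U) : ℤ :=
  if I.mU M u = I.mU N u then 0
  else if I.valU u (I.mU M u) ≤ I.valU u (I.mU N u) then -1 else 1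

def supVoteW (I : PrefInst U W E) (M N : Finset E) (w : W) : ℤ :=
  if I.mW M w = I.mW N w then 0
  else if I.valW w (I.mW M w) ≤ I.valW w (I.mW N w) then -1 else 1

/-- γ-vote of `u`: `0` if same partner; `-1` if `p_u(N(u)) ≥ p_u(M(u)) + γ_{N(u)}^u`;
`+1` otherwise (partner changed without a γ-sized improvement). -/
def gVoteU (I : PrefInst U W E) (γU : E → ℝ) (M N : Finset E) (u : U) : ℤ :=
  if I.mU M u = I.mU N u then 0
  else match I.mU N u with
    | none => 1
    | some e => if I.valU u (I.mU M u) + γU e ≤ I.pU u e then -1 else 1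

def gVoteW (I : PrefInst U W E) (γW : E → ℝ) (M N : Finset E) (w : W) : ℤ :=
  if I.mW M w = I.mW N w then 0
  else match I.mW N w with
    | none => 1
    | some e => if I.valW w (I.mW M w) + γW e ≤ I.pW w e then -1 else 1

variable [Fintype U] [Fintype W]

/-- Popularity (standard votes): `M` never loses a head-to-head comparison. -/
def Popular (I : PrefInst U W E) (M : Finset E) : Prop :=
  ∀ N, I.IsMatching N → 0 ≤ (∑ u, I.sVoteU M N u) + ∑ w, I.sVoteW M N w

/-- Weak popularity. -/
def WeaklyPopular (I : PrefInst U W E) (M : Finset E) : Prop :=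
  ∀ N, I.IsMatching N → 0 ≤ (∑ u, I.wVoteU M N u) + ∑ w, I.wVoteW M N w

/-- Super popularity. -/
def SuperPopular (I : PrefInst U W E) (M : Finset E) : Prop :=
  ∀ N, I.IsMatching N → 0 ≤ (∑ u, I.supVoteU M N u) + ∑ w, I.supVoteW M N w

/-- γ-popularity. -/
def GammaPopular (I : PrefInst U W E) (γU γW : E → ℝ) (M : Finset E) : Prop :=
  ∀ N, I.IsMatching N → 0 ≤ (∑ u, I.gVoteU γU M N u) + ∑ w, I.gVoteW γW M N w

end PrefInst
end

namespace PrefInst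

variable {U W E : Type} [DecidableEq U] [DecidableEq W] [DecidableEq E]

/-- The six-copy duplicated instance: every edge `e` is replaced by the six
parallel copies `(e,0)=a(e), (e,1)=b(e), (e,2)=c(e), (e,3)=x(e), (e,4)=y(e),
(e,5)=z(e)`, with given (strict) preference valuations `pU'`, `pW'`. -/
def dup (I : PrefInst U W E) (pU' : U → E × Fin 6 → ℝ) (pW' : W → E × Fin 6 → ℝ) :
    PrefInst U W (E × Fin 6) where
  src := fun d => I.src d.1
  dst := fun d => I.dst d.1
  pU := pU'
  pW := pW'

/-- `pU'`, `pW'` are valid strict rankings of the six copies: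
side `U` ranks `a ⪰^γ b ≻ c ≻ x ⪰^γ y ≻ z`, side `W` ranks
`z ⪰^γ y ≻ x ≻ c ⪰^γ b ≻ a`; copies of the same (non-`b`,`y`) type are ordered
according to `p_v` (remaining ties broken arbitrarily), and `b(f)` is ranked
above `a(e)` iff `p_v(f) ≥ p_v(e) + γ_f^v` (similarly `y(f)` above `x(e)`). -/
structure DupValid (I : PrefInst U W E) (γU γW : E → ℝ)
    (pU' : U → E × Fin 6 → ℝ) (pW' : W → E × Fin 6 → ℝ) : Prop where
  strictU : ∀ u d₁ d₂, I.src d₁.1 = u → I.src d₂.1 = u → pU' u d₁ = pU' u d₂ → d₁ = d₂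
  strictW : ∀ w d₁ d₂, I.dst d₁.1 = w → I.dst d₂.1 = w → pW' w d₁ = pW' w d₂ → d₁ = d₂
  U_b_a : ∀ u e f, (pU' u (e, 0) < pU' u (f, 1) ↔ I.pU u e + γU f ≤ I.pU u f)
  U_a_c : ∀ u e f, pU' u (f, 2) < pU' u (e, 0)
  U_b_c : ∀ u e f, pU' u (f, 2) < pU' u (e, 1)
  U_c_x : ∀ u e f, pU' u (f, 3) < pU' u (e, 2)
  U_x_y : ∀ u e f, (pU' u (e, 3) < pU' u (f, 4) ↔ I.pU u e + γU f ≤ I.pU u f)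
  U_x_z : ∀ u e f, pU' u (f, 5) < pU' u (e, 3)
  U_y_z : ∀ u e f, pU' u (f, 5) < pU' u (e, 4)
  U_mono : ∀ u e f, ∀ t : Fin 6, t = 0 ∨ t = 2 ∨ t = 3 ∨ t = 5 →
    I.pU u f < I.pU u e → pU' u (f, t) < pU' u (e, t)
  W_z_y : ∀ w e f, (pW' w (e, 5) < pW' w (f, 4) ↔ I.pW w e + γW f ≤ I.pW w f)
  W_z_x : ∀ w e f, pW' w (f, 3) < pW' w (e, 5)
  W_y_x : ∀ w e f, pW' w (f, 3) < pW' w (e, 4)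
  W_x_c : ∀ w e f, pW' w (f, 2) < pW' w (e, 3)
  W_c_b : ∀ w e f, (pW' w (e, 2) < pW' w (f, 1) ↔ I.pW w e + γW f ≤ I.pW w f)
  W_c_a : ∀ w e f, pW' w (f, 0) < pW' w (e, 2)
  W_b_a : ∀ w e f, pW' w (f, 0) < pW' w (e, 1)
  W_mono : ∀ w e f, ∀ t : Fin 6, t = 0 ∨ t = 2 ∨ t = 3 ∨ t = 5 →
    I.pW w f < I.pW w e → pW' w (f, t) < pW' w (e, t)

end PrefInst

namespace PrefInst

variable {U W E : Type} [DecidableEq U] [DecidableEq W] [DecidableEq E]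

lemma mU_eq_of_mem (I : PrefInst U W E) {M : Finset E} (hM : I.IsMatching M)
    {e : E} (he : e ∈ M) {u : U} (hu : I.src e = u) : I.mU M u = some e := by
  have h1 : M.filter (fun f => I.src f = u) = {e} := by
    apply Finset.eq_singleton_iff_unique_mem.mpr
    refine ⟨Finset.mem_filter.mpr ⟨he, hu⟩, fun f hf => ?_⟩
    obtain ⟨hfM, hfs⟩ := Finset.mem_filter.mp hf
    by_contra hne
    exact (hM f hfM e he hne).1 (hfs.trans hu.symm)
  unfold mU
  rw [h1, Finset.toList_singleton]
  rfl

lemma mW_eq_of_mem (I : PrefInst U W E) {M : Finset E} (hM : I.IsMatching M)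
    {e : E} (he : e ∈ M) {w : W} (hw : I.dst e = w) : I.mW M w = some e := by
  have h1 : M.filter (fun f => I.dst f = w) = {e} := by
    apply Finset.eq_singleton_iff_unique_mem.mpr
    refine ⟨Finset.mem_filter.mpr ⟨he, hw⟩, fun f hf => ?_⟩
    obtain ⟨hfM, hfs⟩ := Finset.mem_filter.mp hf
    by_contra hne
    exact (hM f hfM e he hne).2 (hfs.trans hw.symm)
  unfold mW
  rw [h1, Finset.toList_singleton]
  rfl

end PrefInst

open PrefInst in
/-- `M'` stable in the duplicated instance, `M` its projection,
`e=(u,w) ∈ N` with both endpoints matched in `M'`. If both `M'(M(u))` and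
`M'(M(w))` are copies of type `a`, `b` or `c`, then the γ-votes of `u` and `w`
comparing `M` to `N` sum to at least `0`. -/
theorem dup_abc_abc_vote_sum_nonneg
    {U W E : Type} [DecidableEq U] [DecidableEq W] [DecidableEq E]
    (I : PrefInst U W E) (γU γW : E → ℝ)
    (hγU : ∀ e, 0 < γU e) (hγW : ∀ e, 0 < γW e)
    (hpU : ∀ u e, 0 ≤ I.pU u e) (hpW : ∀ w e, 0 ≤ I.pW w e)
    (pU' : U → E × Fin 6 → ℝ) (pW' : W → E × Fin 6 → ℝ)
    (hvalid : I.DupValid γU γW pU' pW')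
    (M' : Finset (E × Fin 6))
    (hM' : (I.dup pU' pW').IsMatching M')
    (hstab : (I.dup pU' pW').WeaklyStable M')
    (N : Finset E) (hN : I.IsMatching N) (e : E) (he : e ∈ N)
    (d₁ d₂ : E × Fin 6) (hd₁ : d₁ ∈ M') (hd₂ : d₂ ∈ M')
    (hd₁u : I.src d₁.1 = I.src e) (hd₂w : I.dst d₂.1 = I.dst e)
    (ht₁ : d₁.2 = 0 ∨ d₁.2 = 1 ∨ d₁.2 = 2)
    (ht₂ : d₂.2 = 0 ∨ d₂.2 = 1 ∨ d₂.2 = 2) :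
    0 ≤ I.gVoteU γU (M'.image Prod.fst) N (I.src e) +
      I.gVoteW γW (M'.image Prod.fst) N (I.dst e) := by
  set M : Finset E := M'.image Prod.fst with hMdef
  have hMmatch : I.IsMatching M := by
    intro f₁ hf₁ f₂ hf₂ hne
    obtain ⟨g₁, hg₁, rfl⟩ := Finset.mem_image.mp hf₁
    obtain ⟨g₂, hg₂, rfl⟩ := Finset.mem_image.mp hf₂
    have hgne : g₁ ≠ g₂ := fun h => hne (by rw [h])
    exact hM' g₁ hg₁ g₂ hg₂ hgne
  have hd₁M : d₁.1 ∈ M := Finset.mem_image_of_mem _ hd₁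
  have hd₂M : d₂.1 ∈ M := Finset.mem_image_of_mem _ hd₂
  have hMu : I.mU M (I.src e) = some d₁.1 := I.mU_eq_of_mem hMmatch hd₁M hd₁u
  have hMw : I.mW M (I.dst e) = some d₂.1 := I.mW_eq_of_mem hMmatch hd₂M hd₂w
  have hNu : I.mU N (I.src e) = some e := I.mU_eq_of_mem hN he rfl
  have hNw : I.mW N (I.dst e) = some e := I.mW_eq_of_mem hN he rfl
  have h12 : d₁.1 = e ∨ d₂.1 = e → d₁ = d₂ := by
    intro h
    by_contra hne
    have hM12 := hM' d₁ hd₁ d₂ hd₂ hne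
    rcases h with h | h
    · exact hM12.2 (show I.dst d₁.1 = I.dst d₂.1 by rw [h, hd₂w])
    · exact hM12.1 (show I.src d₁.1 = I.src d₂.1 by rw [hd₁u, ← h])
  unfold PrefInst.gVoteU PrefInst.gVoteW
  rw [hMu, hNu, hMw, hNw]
  by_cases h1 : d₁.1 = e
  · have h2 : d₂.1 = e := by rw [← h12 (Or.inl h1), h1]
    simp [h1, h2]
  · have h2 : ¬ d₂.1 = e := by
      intro h2
      exact h1 (by rw [h12 (Or.inr h2), h2])
    have hne1 : ¬ (some d₁.1 = some e) := by simpa using h1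
    have hne2 : ¬ (some d₂.1 = some e) := by simpa using h2
    rw [if_neg hne1, if_neg hne2]
    have hvU : I.valU (I.src e) (some d₁.1) = I.pU (I.src e) d₁.1 := rfl
    have hvW : I.valW (I.dst e) (some d₂.1) = I.pW (I.dst e) d₂.1 := rfl
    by_cases hcU : I.valU (I.src e) (some d₁.1) + γU e ≤ I.pU (I.src e) e
    · by_cases hcW : I.valW (I.dst e) (some d₂.1) + γW e ≤ I.pW (I.dst e) e
      · exfalso
        rw [hvU] at hcU
        rw [hvW] at hcW
        apply hstab (e, (1 : Fin 6))
        refine ⟨?_, ?_, ?_⟩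
        · intro hmem
          have hd1e : d₁ = (e, (1 : Fin 6)) := by
            by_contra hne
            exact (hM' d₁ hd₁ _ hmem hne).1 hd₁u
          exact h1 (by rw [hd1e])
        · have hmu' : (I.dup pU' pW').mU M' (I.src e) = some d₁ :=
            (I.dup pU' pW').mU_eq_of_mem hM' hd₁ hd₁u
          show (I.dup pU' pW').valU (I.src e) ((I.dup pU' pW').mU M' (I.src e))
              < pU' (I.src e) (e, 1)
          rw [hmu']
          show pU' (I.src e) d₁ < pU' (I.src e) (e, 1)
          have hd1 : d₁ = (d₁.1, d₁.2) := rfl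
          rcases ht₁ with ht | ht | ht
          · rw [hd1, ht]
            exact (hvalid.U_b_a (I.src e) d₁.1 e).mpr hcU
          · rw [hd1, ht]
            have ha : pU' (I.src e) (d₁.1, 0) < pU' (I.src e) (e, 1) :=
              (hvalid.U_b_a (I.src e) d₁.1 e).mpr hcU
            have hnot : ¬ pU' (I.src e) (d₁.1, 0) < pU' (I.src e) (d₁.1, 1) := by
              rw [hvalid.U_b_a (I.src e) d₁.1 d₁.1]
              push_neg
              linarith [hγU d₁.1]
            rcases lt_or_eq_of_le (not_lt.mp hnot) with hb | hb
            · exact hb.trans ha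
            · exfalso
              have := hvalid.strictU (I.src e) (d₁.1, 1) (d₁.1, 0) hd₁u hd₁u hb
              simpa using congrArg Prod.snd this
          · rw [hd1, ht]
            exact hvalid.U_b_c (I.src e) e d₁.1
        · have hmw' : (I.dup pU' pW').mW M' (I.dst e) = some d₂ :=
            (I.dup pU' pW').mW_eq_of_mem hM' hd₂ hd₂w
          show (I.dup pU' pW').valW (I.dst e) ((I.dup pU' pW').mW M' (I.dst e))
              < pW' (I.dst e) (e, 1)
          rw [hmw']
          show pW' (I.dst e) d₂ < pW' (I.dst e) (e, 1)
          have hd2 : d₂ = (d₂.1, d₂.2) := rfl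
          rcases ht₂ with ht | ht | ht
          · rw [hd2, ht]
            exact hvalid.W_b_a (I.dst e) e d₂.1
          · rw [hd2, ht]
            have ha : pW' (I.dst e) (d₂.1, 2) < pW' (I.dst e) (e, 1) :=
              (hvalid.W_c_b (I.dst e) d₂.1 e).mpr hcW
            have hnot : ¬ pW' (I.dst e) (d₂.1, 2) < pW' (I.dst e) (d₂.1, 1) := by
              rw [hvalid.W_c_b (I.dst e) d₂.1 d₂.1]
              push_neg
              linarith [hγW d₂.1]
            rcases lt_or_eq_of_le (not_lt.mp hnot) with hb | hb
            · exact hb.trans ha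
            · exfalso
              have := hvalid.strictW (I.dst e) (d₂.1, 1) (d₂.1, 2) hd₂w hd₂w hb
              simpa using congrArg Prod.snd this
          · rw [hd2, ht]
            exact (hvalid.W_c_b (I.dst e) d₂.1 e).mpr hcW
      · simp only [hcU, hcW, if_pos, if_neg]
        norm_num
    · by_cases hcW : I.valW (I.dst e) (some d₂.1) + γW e ≤ I.pW (I.dst e) e
      · simp only [hcU, hcW, if_pos, if_neg]
        norm_num
      · simp only [hcU, hcW, if_neg]
        norm_num
end

section
/- Let M' be a stable matching in the six-copy duplicated instance, M its projection, and N any matching with e=(u,w)∈N, both endpoints matched in M'. If M'(M(u)) is of type x, y, or z and M'(M(w)) is of type a, b, or c, then both u and w vote +1 when comparing M to N, i.e., the sum of their γ-votes equals +2. -/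
open Finset
open scoped Classical
/-!
If `(u, w) = e ∈ N`, `u` is matched in `M'` to a copy of type `x`, `y` or `z` and `w` to a copy
of type `a`, `b` or `c`, then `w` ranks `y(e)` above its partner and `u` ranks `b(e)` above its
partner. Should `u` gain at least `γ` by moving from `M(u)` to `e`, `u` would also rank `y(e)`
above its partner and `y(e)` would block `M'`; symmetrically `b(e)` would block `M'` if `w` gained
at least `γ`. So neither endpoint gains enough, and both vote `+1` for `M`.
-/

namespace PrefInst

variable {U W E : Type}

section Matching

variable (I : PrefInst U W E) {M : Finset E}

lemma mU_eq_some_of_mem [DecidableEq U] (hM : I.IsMatching M) {d : E} {u : U} (hd : d ∈ M)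
    (hu : I.src d = u) : I.mU M u = some d := by
  have hfilter : M.filter (fun f => I.src f = u) = {d} := by
    ext f
    simp only [Finset.mem_filter, Finset.mem_singleton]
    refine ⟨fun ⟨hf, hfu⟩ => ?_, fun hf => hf ▸ ⟨hd, hu⟩⟩
    by_contra hne
    exact (hM f hf d hd hne).1 (hfu.trans hu.symm)
  simp [mU, hfilter]

lemma mW_eq_some_of_mem [DecidableEq W] (hM : I.IsMatching M) {d : E} {w : W} (hd : d ∈ M)
    (hw : I.dst d = w) : I.mW M w = some d := by
  have hfilter : M.filter (fun f => I.dst f = w) = {d} := by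
    ext f
    simp only [Finset.mem_filter, Finset.mem_singleton]
    refine ⟨fun ⟨hf, hfw⟩ => ?_, fun hf => hf ▸ ⟨hd, hw⟩⟩
    by_contra hne
    exact (hM f hf d hd hne).2 (hfw.trans hw.symm)
  simp [mW, hfilter]

lemma blocks_of_lt [DecidableEq U] [DecidableEq W] (hM : I.IsMatching M) {a b e : E}
    (ha : a ∈ M) (hb : b ∈ M) (hau : I.src a = I.src e) (hbw : I.dst b = I.dst e)
    (hu : I.pU (I.src e) a < I.pU (I.src e) e) (hw : I.pW (I.dst e) b < I.pW (I.dst e) e) :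
    I.Blocks M e := by
  have hMu := I.mU_eq_some_of_mem hM ha hau
  have hMw := I.mW_eq_some_of_mem hM hb hbw
  refine ⟨fun he => ?_, by rw [hMu]; exact hu, by rw [hMw]; exact hw⟩
  have hae : a = e := Option.some_injective _ (hMu.symm.trans (I.mU_eq_some_of_mem hM he rfl))
  exact hu.ne (congrArg _ hae)

lemma gVoteU_eq_one [DecidableEq U] [DecidableEq E] (γU : E → ℝ) {N : Finset E} {u : U}
    {f e : E} (hMu : I.mU M u = some f) (hNu : I.mU N u = some e) (hfe : f ≠ e)
    (hgain : ¬ I.pU u f + γU e ≤ I.pU u e) :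
    I.gVoteU γU M N u = 1 := by
  simp [gVoteU, hMu, hNu, hfe, valU, hgain]

lemma gVoteW_eq_one [DecidableEq W] [DecidableEq E] (γW : E → ℝ) {N : Finset E} {w : W}
    {f e : E} (hMw : I.mW M w = some f) (hNw : I.mW N w = some e) (hfe : f ≠ e)
    (hgain : ¬ I.pW w f + γW e ≤ I.pW w e) :
    I.gVoteW γW M N w = 1 := by
  simp [gVoteW, hMw, hNw, hfe, valW, hgain]

end Matching

section Duplicate

variable {I : PrefInst U W E} {pU' : U → E × Fin 6 → ℝ} {pW' : W → E × Fin 6 → ℝ}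

lemma isMatching_image_fst [DecidableEq E] {M' : Finset (E × Fin 6)}
    (hM' : (I.dup pU' pW').IsMatching M') :
    I.IsMatching (M'.image Prod.fst) := by
  simp only [IsMatching, Finset.mem_image]
  rintro _ ⟨d, hd, rfl⟩ _ ⟨d', hd', rfl⟩ hne
  exact hM' d hd d' hd' fun h => hne (congrArg Prod.fst h)

lemma fst_ne_of_snd_ne {M' : Finset (E × Fin 6)} (hM' : (I.dup pU' pW').IsMatching M')
    {d₁ d₂ : E × Fin 6} {e : E} (hd₁ : d₁ ∈ M') (hd₂ : d₂ ∈ M') (h12 : d₁.2 ≠ d₂.2)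
    (hd₁u : I.src d₁.1 = I.src e) (hd₂w : I.dst d₂.1 = I.dst e) : d₁.1 ≠ e ∧ d₂.1 ≠ e := by
  have hne : d₁ ≠ d₂ := fun h => h12 (congrArg Prod.snd h)
  constructor
  · rintro rfl
    exact (hM' d₁ hd₁ d₂ hd₂ hne).2 hd₂w.symm
  · rintro rfl
    exact (hM' d₁ hd₁ d₂ hd₂ hne).1 hd₁u

variable {γU γW : E → ℝ} (hv : I.DupValid γU γW pU' pW')
include hv

lemma DupValid.pU'_le_x (hγU : ∀ e, 0 < γU e) (u : U) {d : E × Fin 6}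
    (ht : d.2 = 3 ∨ d.2 = 4 ∨ d.2 = 5) : pU' u d ≤ pU' u (d.1, 3) := by
  obtain ⟨f, t⟩ := d
  rcases ht with rfl | rfl | rfl
  · exact le_rfl
  · exact not_lt.mp fun h => ((hv.U_x_y u f f).mp h).not_gt (lt_add_of_pos_right _ (hγU f))
  · exact (hv.U_x_z u f f).le

lemma DupValid.pW'_le_c (hγW : ∀ e, 0 < γW e) (w : W) {d : E × Fin 6}
    (ht : d.2 = 0 ∨ d.2 = 1 ∨ d.2 = 2) : pW' w d ≤ pW' w (d.1, 2) := by
  obtain ⟨f, t⟩ := d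
  rcases ht with rfl | rfl | rfl
  · exact (hv.W_c_a w f f).le
  · exact not_lt.mp fun h => ((hv.W_c_b w f f).mp h).not_gt (lt_add_of_pos_right _ (hγW f))
  · exact le_rfl

lemma DupValid.pU'_lt_b (hγU : ∀ e, 0 < γU e) (u : U) (e : E) {d : E × Fin 6}
    (ht : d.2 = 3 ∨ d.2 = 4 ∨ d.2 = 5) : pU' u d < pU' u (e, 1) :=
  (hv.pU'_le_x hγU u ht).trans_lt ((hv.U_c_x u e d.1).trans (hv.U_b_c u e e))

lemma DupValid.pW'_lt_y (hγW : ∀ e, 0 < γW e) (w : W) (e : E) {d : E × Fin 6}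
    (ht : d.2 = 0 ∨ d.2 = 1 ∨ d.2 = 2) : pW' w d < pW' w (e, 4) :=
  (hv.pW'_le_c hγW w ht).trans_lt ((hv.W_x_c w e d.1).trans (hv.W_y_x w e e))

lemma DupValid.pU'_lt_y (hγU : ∀ e, 0 < γU e) {u : U} {e : E} {d : E × Fin 6}
    (ht : d.2 = 3 ∨ d.2 = 4 ∨ d.2 = 5) (hgain : I.pU u d.1 + γU e ≤ I.pU u e) :
    pU' u d < pU' u (e, 4) :=
  (hv.pU'_le_x hγU u ht).trans_lt ((hv.U_x_y u d.1 e).mpr hgain)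

lemma DupValid.pW'_lt_b (hγW : ∀ e, 0 < γW e) {w : W} {e : E} {d : E × Fin 6}
    (ht : d.2 = 0 ∨ d.2 = 1 ∨ d.2 = 2) (hgain : I.pW w d.1 + γW e ≤ I.pW w e) :
    pW' w d < pW' w (e, 1) :=
  (hv.pW'_le_c hγW w ht).trans_lt ((hv.W_c_b w d.1 e).mpr hgain)

end Duplicate

end PrefInst

open PrefInst in
theorem dup_xyz_abc_vote_sum_two_general
    {U W E : Type} [DecidableEq U] [DecidableEq W] [DecidableEq E]
    (I : PrefInst U W E) (γU γW : E → ℝ)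
    (hγU : ∀ e, 0 < γU e) (hγW : ∀ e, 0 < γW e)
    (pU' : U → E × Fin 6 → ℝ) (pW' : W → E × Fin 6 → ℝ)
    (hvalid : I.DupValid γU γW pU' pW')
    (M' : Finset (E × Fin 6))
    (hM' : (I.dup pU' pW').IsMatching M')
    (hstab : (I.dup pU' pW').WeaklyStable M')
    (N : Finset E) (hN : I.IsMatching N) (e : E) (he : e ∈ N)
    (d₁ d₂ : E × Fin 6) (hd₁ : d₁ ∈ M') (hd₂ : d₂ ∈ M')
    (hd₁u : I.src d₁.1 = I.src e) (hd₂w : I.dst d₂.1 = I.dst e)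
    (ht₁ : d₁.2 = 3 ∨ d₁.2 = 4 ∨ d₁.2 = 5)
    (ht₂ : d₂.2 = 0 ∨ d₂.2 = 1 ∨ d₂.2 = 2) :
    I.gVoteU γU (M'.image Prod.fst) N (I.src e) = 1 ∧
    I.gVoteW γW (M'.image Prod.fst) N (I.dst e) = 1 ∧
    I.gVoteU γU (M'.image Prod.fst) N (I.src e) +
      I.gVoteW γW (M'.image Prod.fst) N (I.dst e) = 2 := by
  have hM := isMatching_image_fst hM'
  have h12 : d₁.2 ≠ d₂.2 := by
    rcases ht₁ with h₁ | h₁ | h₁ <;> rcases ht₂ with h₂ | h₂ | h₂ <;> rw [h₁, h₂] <;> decide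
  obtain ⟨h₁e, h₂e⟩ := fst_ne_of_snd_ne hM' hd₁ hd₂ h12 hd₁u hd₂w
  have hU : ¬ I.pU (I.src e) d₁.1 + γU e ≤ I.pU (I.src e) e := fun hgain =>
    hstab (e, 4) <| blocks_of_lt _ hM' hd₁ hd₂ hd₁u hd₂w
      (hvalid.pU'_lt_y hγU ht₁ hgain) (hvalid.pW'_lt_y hγW _ e ht₂)
  have hW : ¬ I.pW (I.dst e) d₂.1 + γW e ≤ I.pW (I.dst e) e := fun hgain =>
    hstab (e, 1) <| blocks_of_lt _ hM' hd₁ hd₂ hd₁u hd₂w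
      (hvalid.pU'_lt_b hγU _ e ht₁) (hvalid.pW'_lt_b hγW ht₂ hgain)
  have hvU := I.gVoteU_eq_one γU (I.mU_eq_some_of_mem hM (Finset.mem_image_of_mem _ hd₁) hd₁u)
    (I.mU_eq_some_of_mem hN he rfl) h₁e hU
  have hvW := I.gVoteW_eq_one γW (I.mW_eq_some_of_mem hM (Finset.mem_image_of_mem _ hd₂) hd₂w)
    (I.mW_eq_some_of_mem hN he rfl) h₂e hW
  exact ⟨hvU, hvW, by rw [hvU, hvW]; rfl⟩

open PrefInst in
/-- `M'` stable in the duplicated instance, `M` its projection,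
`e=(u,w) ∈ N` with both endpoints matched in `M'`. If `M'(M(u))` is of type
`x`, `y` or `z` and `M'(M(w))` is of type `a`, `b` or `c`, then both `u` and `w`
vote `+1` comparing `M` to `N`, so their γ-votes sum to `+2`. -/
theorem dup_xyz_abc_vote_sum_two
    {U W E : Type} [DecidableEq U] [DecidableEq W] [DecidableEq E]
    (I : PrefInst U W E) (γU γW : E → ℝ)
    (hγU : ∀ e, 0 < γU e) (hγW : ∀ e, 0 < γW e)
    (hpU : ∀ u e, 0 ≤ I.pU u e) (hpW : ∀ w e, 0 ≤ I.pW w e)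
    (pU' : U → E × Fin 6 → ℝ) (pW' : W → E × Fin 6 → ℝ)
    (hvalid : I.DupValid γU γW pU' pW')
    (M' : Finset (E × Fin 6))
    (hM' : (I.dup pU' pW').IsMatching M')
    (hstab : (I.dup pU' pW').WeaklyStable M')
    (N : Finset E) (hN : I.IsMatching N) (e : E) (he : e ∈ N)
    (d₁ d₂ : E × Fin 6) (hd₁ : d₁ ∈ M') (hd₂ : d₂ ∈ M')
    (hd₁u : I.src d₁.1 = I.src e) (hd₂w : I.dst d₂.1 = I.dst e)
    (ht₁ : d₁.2 = 3 ∨ d₁.2 = 4 ∨ d₁.2 = 5)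
    (ht₂ : d₂.2 = 0 ∨ d₂.2 = 1 ∨ d₂.2 = 2) :
    I.gVoteU γU (M'.image Prod.fst) N (I.src e) = 1 ∧
    I.gVoteW γW (M'.image Prod.fst) N (I.dst e) = 1 ∧
    I.gVoteU γU (M'.image Prod.fst) N (I.src e) +
      I.gVoteW γW (M'.image Prod.fst) N (I.dst e) = 2 :=
  dup_xyz_abc_vote_sum_two_general I γU γW hγU hγW pU' pW' hvalid M' hM' hstab N hN e he d₁ d₂ hd₁
    hd₂ hd₁u hd₂w ht₁ ht₂
end

section
/- In the inapproximability-reduction instance I' built from a bipartite graph G with |U|=|W|=n (n even), if G has a maximal matching of size k ≥ n/2, then I' has a weakly popular matching of size at least (5/2)n − k. -/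
open Finset
open scoped Classical
namespace PrefInst

/-- `K` is a maximal matching of the bipartite graph `G ⊆ U × W` (given as a
finite set of pairs): it is a matching contained in `G` to which no pair of `G`
can be added. -/
def IsMaximalMatchingOf {α β : Type} [DecidableEq α] [DecidableEq β]
    (G K : Finset (α × β)) : Prop :=
  K ⊆ G ∧ (∀ p ∈ K, ∀ q ∈ K, p ≠ q → p.1 ≠ q.1 ∧ p.2 ≠ q.2) ∧
    ∀ p ∈ G, ∃ q ∈ K, q.1 = p.1 ∨ q.2 = p.2

/-- The inapproximability-reduction instance `I'` built from a bipartite graph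
`G` on `U = W = Fin n`, `n = 2m` even.  U-side agents: `u_i` (`inl i`), `w_i'`
(`inr (inl i)`), `z_j` (`inr (inr j)`); W-side agents: `w_i` (`inl i`), `u_j'`
(`inr (inl j)`), `z_j'` (`inr (inr j)`).  Edges: `inl ⟨(i,j),_⟩` the edges of
`G`; `inr (inl i) = (w_i,w_i')`; `inr (inr (inl (i,j))) = (u_i,u_j')`;
`inr (inr (inr (inl j))) = (u_j',z_j)`; `inr (inr (inr (inr j))) = (z_j,z_j')`.
Preferences: `u_i: [V_G(u_i)] ≻ [U']`; `w_i: [V_G(w_i)] ≻ w_i'`; `w_i': w_i`;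
`u_j': z_j ≻ [U]`; `z_j: u_j' ≻ z_j'`; `z_j': z_j` (brackets are ties). -/
noncomputable def inapx (m : ℕ) (G : Finset (Fin (2 * m) × Fin (2 * m))) :
    PrefInst (Fin (2 * m) ⊕ Fin (2 * m) ⊕ Fin m) (Fin (2 * m) ⊕ Fin m ⊕ Fin m)
      ({p : Fin (2 * m) × Fin (2 * m) // p ∈ G} ⊕ Fin (2 * m) ⊕
        (Fin (2 * m) × Fin m) ⊕ Fin m ⊕ Fin m) where
  src := fun d =>
    match d with
    | Sum.inl p => Sum.inl p.1.1
    | Sum.inr (Sum.inl i) => Sum.inr (Sum.inl i)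
    | Sum.inr (Sum.inr (Sum.inl (i, _))) => Sum.inl i
    | Sum.inr (Sum.inr (Sum.inr (Sum.inl j))) => Sum.inr (Sum.inr j)
    | Sum.inr (Sum.inr (Sum.inr (Sum.inr j))) => Sum.inr (Sum.inr j)
  dst := fun d =>
    match d with
    | Sum.inl p => Sum.inl p.1.2
    | Sum.inr (Sum.inl i) => Sum.inl i
    | Sum.inr (Sum.inr (Sum.inl (_, j))) => Sum.inr (Sum.inl j)
    | Sum.inr (Sum.inr (Sum.inr (Sum.inl j))) => Sum.inr (Sum.inl j)
    | Sum.inr (Sum.inr (Sum.inr (Sum.inr j))) => Sum.inr (Sum.inr j)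
  pU := fun v d =>
    match v, d with
    | Sum.inl i, Sum.inl p => if p.1.1 = i then 2 else 0
    | Sum.inl i, Sum.inr (Sum.inr (Sum.inl (a, _))) => if a = i then 1 else 0
    | Sum.inl _, _ => 0
    | Sum.inr (Sum.inl i), Sum.inr (Sum.inl a) => if a = i then 1 else 0
    | Sum.inr (Sum.inl _), _ => 0
    | Sum.inr (Sum.inr j), Sum.inr (Sum.inr (Sum.inr (Sum.inl a))) =>
        if a = j then 2 else 0
    | Sum.inr (Sum.inr j), Sum.inr (Sum.inr (Sum.inr (Sum.inr a))) =>
        if a = j then 1 else 0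
    | Sum.inr (Sum.inr _), _ => 0
  pW := fun v d =>
    match v, d with
    | Sum.inl i, Sum.inl p => if p.1.2 = i then 2 else 0
    | Sum.inl i, Sum.inr (Sum.inl a) => if a = i then 1 else 0
    | Sum.inl _, _ => 0
    | Sum.inr (Sum.inl j), Sum.inr (Sum.inr (Sum.inr (Sum.inl a))) =>
        if a = j then 2 else 0
    | Sum.inr (Sum.inl j), Sum.inr (Sum.inr (Sum.inl (_, b))) =>
        if b = j then 1 else 0
    | Sum.inr (Sum.inl _), _ => 0
    | Sum.inr (Sum.inr j), Sum.inr (Sum.inr (Sum.inr (Sum.inr a))) =>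
        if a = j then 1 else 0
    | Sum.inr (Sum.inr _), _ => 0

end PrefInst

/-! Extend the maximal matching `K` of `G` (size `k`) to a matching `M` of `I'`: each `w_i`
exposed by `K` takes `w_i'`, the `n - k ≤ n/2` exposed `u_i` go injectively to `U'`, the
remaining `u_j'` take `z_j`, and the `z_j` whose `u_j'` is taken take `z_j'`; this gives
`k + 2(n - k) + n/2 = 5n/2 - k` edges (in the code `n = 2m`).

Weak popularity of `M` is certified by LP duality: weights `α` on the agents, of total weight
`0`, such that every agent's vote for its `M`-partner against being unmatched is at least its
weight, and for every edge `e` the two votes for the `M`-partners against `e` add up to at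
least the weights of its endpoints. Summing these inequalities over the edges and the exposed
agents of any matching `N` shows that `M` does not lose against `N`. For the edges of `G` outside
`K` it is the maximality of `K` that makes this work: one endpoint already has a `G`-partner,
which it values `2`, and does not vote for the edge. -/

theorem Finset.sum_univ_eq_sum_comp_add_sum_compl_image {ι α β : Type*} [Fintype α]
    [DecidableEq α] [AddCommMonoid β] {s : Finset ι} {φ : ι → α} (hφ : Set.InjOn φ s)
    (g : α → β) : ∑ a, g a = ∑ i ∈ s, g (φ i) + ∑ a ∈ (s.image φ)ᶜ, g a := by
  rw [← sum_image hφ, sum_add_sum_compl]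

namespace PrefInst

variable {U W E : Type} {I : PrefInst U W E} {M : Finset E}

theorem IsMatching.injOn_src (hM : I.IsMatching M) : Set.InjOn I.src M :=
  fun e he f hf hef => by_contra fun hne => (hM e he f hf hne).1 hef

theorem IsMatching.injOn_dst (hM : I.IsMatching M) : Set.InjOn I.dst M :=
  fun e he f hf hef => by_contra fun hne => (hM e he f hf hne).2 hef

@[simp] theorem valU_none (u : U) : I.valU u none = 0 := rfl

@[simp] theorem valU_some (u : U) (e : E) : I.valU u (some e) = I.pU u e := rfl

@[simp] theorem valW_none (w : W) : I.valW w none = 0 := rfl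

@[simp] theorem valW_some (w : W) (e : E) : I.valW w (some e) = I.pW w e := rfl

section SideU

variable [DecidableEq U] {u : U}

theorem mU_eq_none_iff : I.mU M u = none ↔ ∀ e ∈ M, I.src e ≠ u := by
  simp [mU, filter_eq_empty_iff]

theorem mem_of_mU_eq_some {e : E} (h : I.mU M u = some e) : e ∈ M :=
  (mem_filter.1 (mem_toList.1 (List.mem_of_head? h))).1

theorem IsMatching.mU_src (hM : I.IsMatching M) {e : E} (he : e ∈ M) :
    I.mU M (I.src e) = some e := by
  have : M.filter (fun f => I.src f = I.src e) = {e} :=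
    eq_singleton_iff_unique_mem.2 ⟨mem_filter.2 ⟨he, rfl⟩,
      fun f hf => hM.injOn_src (mem_filter.1 hf).1 he (mem_filter.1 hf).2⟩
  simp [mU, this]

theorem IsMatching.valU_mU_src (hM : I.IsMatching M) {e : E} (he : e ∈ M) :
    I.valU (I.src e) (I.mU M (I.src e)) = I.pU (I.src e) e := by
  rw [hM.mU_src he, valU_some]

variable [DecidableEq E]

variable (I) in
/-- The weak vote of `u` for its partner in `M` against the alternative partner `o`:
`wVoteU M N u` is `wVoteVsU M u (mU N u)`. -/
noncomputable def wVoteVsU (M : Finset E) (u : U) (o : Option E) : ℤ :=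
  if I.mU M u = o then 0 else if I.valU u (I.mU M u) < I.valU u o then -1 else 1

theorem ite_pos_le_wVoteVsU_none (h : 0 ≤ I.valU u (I.mU M u)) :
    (if 0 < I.valU u (I.mU M u) then 1 else 0) ≤ I.wVoteVsU M u none := by
  rw [wVoteVsU, valU_none, if_neg h.not_gt]
  split_ifs with h₀ h₁
  · simp [h₁] at h₀
  all_goals norm_num

theorem IsMatching.wVoteVsU_src (hM : I.IsMatching M) {e : E} (he : e ∈ M) :
    I.wVoteVsU M (I.src e) (some e) = 0 := by
  rw [wVoteVsU, if_pos (hM.mU_src he)]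

theorem wVoteVsU_of_not_mem {e : E} (he : e ∉ M) :
    I.wVoteVsU M u (some e) = if I.valU u (I.mU M u) < I.pU u e then -1 else 1 := by
  rw [wVoteVsU, if_neg fun h => he (mem_of_mU_eq_some h)]
  rfl

theorem sum_wVoteU_eq [Fintype U] {N : Finset E} (hN : I.IsMatching N) :
    ∑ u, I.wVoteU M N u = ∑ e ∈ N, I.wVoteVsU M (I.src e) (some e) +
      ∑ u ∈ (N.image I.src)ᶜ, I.wVoteVsU M u none := by
  rw [sum_univ_eq_sum_comp_add_sum_compl_image hN.injOn_src]
  congr 1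
  · exact sum_congr rfl fun e he => by rw [wVoteU, hN.mU_src he]; rfl
  · refine sum_congr rfl fun u hu => ?_
    have : I.mU N u = none :=
      mU_eq_none_iff.2 fun e he heu => mem_compl.1 hu (mem_image.2 ⟨e, he, heu⟩)
    rw [wVoteU, this]; rfl

end SideU

section SideW

variable [DecidableEq W] {w : W}

theorem mW_eq_none_iff : I.mW M w = none ↔ ∀ e ∈ M, I.dst e ≠ w := by
  simp [mW, filter_eq_empty_iff]

theorem mem_of_mW_eq_some {e : E} (h : I.mW M w = some e) : e ∈ M :=
  (mem_filter.1 (mem_toList.1 (List.mem_of_head? h))).1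

theorem IsMatching.mW_dst (hM : I.IsMatching M) {e : E} (he : e ∈ M) :
    I.mW M (I.dst e) = some e := by
  have : M.filter (fun f => I.dst f = I.dst e) = {e} :=
    eq_singleton_iff_unique_mem.2 ⟨mem_filter.2 ⟨he, rfl⟩,
      fun f hf => hM.injOn_dst (mem_filter.1 hf).1 he (mem_filter.1 hf).2⟩
  simp [mW, this]

theorem IsMatching.valW_mW_dst (hM : I.IsMatching M) {e : E} (he : e ∈ M) :
    I.valW (I.dst e) (I.mW M (I.dst e)) = I.pW (I.dst e) e := by
  rw [hM.mW_dst he, valW_some]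

variable [DecidableEq E]

variable (I) in
noncomputable def wVoteVsW (M : Finset E) (w : W) (o : Option E) : ℤ :=
  if I.mW M w = o then 0 else if I.valW w (I.mW M w) < I.valW w o then -1 else 1

theorem ite_pos_le_wVoteVsW_none (h : 0 ≤ I.valW w (I.mW M w)) :
    (if 0 < I.valW w (I.mW M w) then 1 else 0) ≤ I.wVoteVsW M w none := by
  rw [wVoteVsW, valW_none, if_neg h.not_gt]
  split_ifs with h₀ h₁
  · simp [h₁] at h₀
  all_goals norm_num

theorem IsMatching.wVoteVsW_dst (hM : I.IsMatching M) {e : E} (he : e ∈ M) :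
    I.wVoteVsW M (I.dst e) (some e) = 0 := by
  rw [wVoteVsW, if_pos (hM.mW_dst he)]

theorem wVoteVsW_of_not_mem {e : E} (he : e ∉ M) :
    I.wVoteVsW M w (some e) = if I.valW w (I.mW M w) < I.pW w e then -1 else 1 := by
  rw [wVoteVsW, if_neg fun h => he (mem_of_mW_eq_some h)]
  rfl

theorem sum_wVoteW_eq [Fintype W] {N : Finset E} (hN : I.IsMatching N) :
    ∑ w, I.wVoteW M N w = ∑ e ∈ N, I.wVoteVsW M (I.dst e) (some e) +
      ∑ w ∈ (N.image I.dst)ᶜ, I.wVoteVsW M w none := by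
  rw [sum_univ_eq_sum_comp_add_sum_compl_image hN.injOn_dst]
  congr 1
  · exact sum_congr rfl fun e he => by rw [wVoteW, hN.mW_dst he]; rfl
  · refine sum_congr rfl fun w hw => ?_
    have : I.mW N w = none :=
      mW_eq_none_iff.2 fun e he hew => mem_compl.1 hw (mem_image.2 ⟨e, he, hew⟩)
    rw [wVoteW, this]; rfl

end SideW

section Certificate

variable [DecidableEq U] [DecidableEq W] [DecidableEq E] [Fintype U] [Fintype W]

theorem weaklyPopular_of_certificate (αU : U → ℤ) (αW : W → ℤ)
    (hU : ∀ u, αU u ≤ I.wVoteVsU M u none) (hW : ∀ w, αW w ≤ I.wVoteVsW M w none)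
    (hE : ∀ e, αU (I.src e) + αW (I.dst e) ≤
      I.wVoteVsU M (I.src e) (some e) + I.wVoteVsW M (I.dst e) (some e))
    (hα : 0 ≤ ∑ u, αU u + ∑ w, αW w) : I.WeaklyPopular M := by
  intro N hN
  rw [sum_univ_eq_sum_comp_add_sum_compl_image hN.injOn_src αU,
    sum_univ_eq_sum_comp_add_sum_compl_image hN.injOn_dst αW] at hα
  have hEN := sum_le_sum fun e (_ : e ∈ N) => hE e
  have hUN := sum_le_sum fun u (_ : u ∈ (N.image I.src)ᶜ) => hU u
  have hWN := sum_le_sum fun w (_ : w ∈ (N.image I.dst)ᶜ) => hW w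
  rw [sum_add_distrib, sum_add_distrib] at hEN
  rw [sum_wVoteU_eq hN, sum_wVoteW_eq hN]
  linarith

theorem IsMatching.weaklyPopular_of_certificate (hM : I.IsMatching M) (αU : U → ℤ)
    (αW : W → ℤ) (hU : ∀ u, αU u ≤ I.wVoteVsU M u none)
    (hW : ∀ w, αW w ≤ I.wVoteVsW M w none)
    (hin : ∀ e ∈ M, αU (I.src e) + αW (I.dst e) ≤ 0)
    (hout : ∀ e ∉ M, αU (I.src e) + αW (I.dst e) ≤
      (if I.valU (I.src e) (I.mU M (I.src e)) < I.pU (I.src e) e then -1 else 1) +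
        (if I.valW (I.dst e) (I.mW M (I.dst e)) < I.pW (I.dst e) e then -1 else 1))
    (hα : 0 ≤ ∑ u, αU u + ∑ w, αW w) : I.WeaklyPopular M := by
  refine I.weaklyPopular_of_certificate αU αW hU hW (fun e => ?_) hα
  by_cases he : e ∈ M
  · rw [hM.wVoteVsU_src he, hM.wVoteVsW_dst he, add_zero]
    exact hin e he
  · rw [wVoteVsU_of_not_mem he, wVoteVsW_of_not_mem he]
    exact hout e he

end Certificate

theorem IsMaximalMatchingOf.card_image_fst {α β : Type} [DecidableEq α] [DecidableEq β]
    {G K : Finset (α × β)} (hK : IsMaximalMatchingOf G K) : #(K.image Prod.fst) = #K :=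
  card_image_of_injOn fun p hp q hq h => by_contra fun hne => (hK.2.1 p hp q hq hne).1 h

theorem IsMaximalMatchingOf.card_image_snd {α β : Type} [DecidableEq α] [DecidableEq β]
    {G K : Finset (α × β)} (hK : IsMaximalMatchingOf G K) : #(K.image Prod.snd) = #K :=
  card_image_of_injOn fun p hp q hq h => by_contra fun hne => (hK.2.1 p hp q hq hne).2 h

variable {m : ℕ}

abbrev InapxEdge (m : ℕ) (G : Finset (Fin (2 * m) × Fin (2 * m))) : Type :=
  {p : Fin (2 * m) × Fin (2 * m) // p ∈ G} ⊕ Fin (2 * m) ⊕ (Fin (2 * m) × Fin m) ⊕ Fin m ⊕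
    Fin m

/-- Membership in the matching
`K ∪ {(w_i, w_i') : w_i exposed by K} ∪ {(u_i, u'_{f i}) : u_i exposed by K}
∪ {(u'_j, z_j) : j ∉ range f} ∪ {(z_j, z_j') : j ∈ range f}` of `inapx m G`,
where `f` injects the vertices `u_i` exposed by `K` into the indices of `U'`. -/
def InReductionMatching {G : Finset (Fin (2 * m) × Fin (2 * m))}
    (K : Finset (Fin (2 * m) × Fin (2 * m))) (f : ↥(K.image Prod.fst)ᶜ ↪ Fin m) :
    InapxEdge m G → Prop
  | .inl q => q.1 ∈ K
  | .inr (.inl i) => i ∉ K.image Prod.snd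
  | .inr (.inr (.inl (i, j))) => ∃ h : i ∈ (K.image Prod.fst)ᶜ, f ⟨i, h⟩ = j
  | .inr (.inr (.inr (.inl j))) => j ∉ univ.map f
  | .inr (.inr (.inr (.inr j))) => j ∈ univ.map f

noncomputable def reductionMatching (G K : Finset (Fin (2 * m) × Fin (2 * m)))
    (f : ↥(K.image Prod.fst)ᶜ ↪ Fin m) : Finset (InapxEdge m G) :=
  univ.filter (InReductionMatching K f)

variable {G K : Finset (Fin (2 * m) × Fin (2 * m))} {f : ↥(K.image Prod.fst)ᶜ ↪ Fin m}

theorem mem_reductionMatching {e : InapxEdge m G} :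
    e ∈ reductionMatching G K f ↔ InReductionMatching K f e := by
  simp [reductionMatching]

theorem isMatching_reductionMatching (hK : IsMaximalMatchingOf G K) :
    (inapx m G).IsMatching (reductionMatching G K f) := by
  obtain ⟨-, hKmatch, -⟩ := hK
  intro e he e' he' hne
  rw [mem_reductionMatching] at he he'
  rcases e with q | i | ⟨i, j⟩ | j | j <;> rcases e' with q' | i' | ⟨i', j'⟩ | j' | j' <;>
    simp only [InReductionMatching] at he he' <;>
    simp only [inapx, ne_eq, Sum.inl.injEq, Sum.inr.injEq, reduceCtorEq, not_false_eq_true,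
      and_true, true_and]
  · exact hKmatch _ he _ he' fun h => hne (congrArg Sum.inl (Subtype.ext h))
  · exact fun h => he' (h ▸ mem_image_of_mem _ he)
  · exact fun h => mem_compl.1 he'.1 (h ▸ mem_image_of_mem _ he)
  · exact fun h => he (h ▸ mem_image_of_mem _ he')
  · exact ⟨fun h => hne (h ▸ rfl), fun h => hne (h ▸ rfl)⟩
  · exact fun h => mem_compl.1 he.1 (h ▸ mem_image_of_mem _ he')
  · obtain ⟨h, rfl⟩ := he
    obtain ⟨h', rfl⟩ := he'
    have hi : i ≠ i' := fun hi => hne (by subst hi; rfl)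
    exact ⟨hi, fun hj => hi (congrArg Subtype.val (f.injective hj))⟩
  · obtain ⟨h, rfl⟩ := he
    exact fun hj => he' (hj ▸ mem_map_of_mem f (mem_univ _))
  · obtain ⟨h', rfl⟩ := he'
    exact fun hj => he (hj ▸ mem_map_of_mem f (mem_univ _))
  · exact ⟨fun h => hne (h ▸ rfl), fun h => hne (h ▸ rfl)⟩
  · exact fun hj => he (hj ▸ he')
  · exact fun hj => he' (hj ▸ he)
  · exact ⟨fun h => hne (h ▸ rfl), fun h => hne (h ▸ rfl)⟩

theorem card_reductionMatching (hK : IsMaximalMatchingOf G K) :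
    #(reductionMatching G K f) = 5 * m - #K := by
  have hKm : #K ≤ 2 * m := by
    simpa [hK.card_image_fst] using card_le_univ (K.image Prod.fst)
  have hG : (∑ q : G, if InReductionMatching K f (.inl q) then 1 else 0) = #K := by
    rw [sum_boole, Nat.cast_id, ← card_map (Function.Embedding.subtype _)]
    congr 1
    ext p
    simp only [mem_map, mem_filter, mem_univ, true_and]
    simp only [InReductionMatching, Function.Embedding.coe_subtype]
    exact ⟨fun ⟨q, hq, hqp⟩ => hqp ▸ hq, fun hp => ⟨⟨p, hK.1 hp⟩, hp, rfl⟩⟩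
  have hW : (∑ i, if InReductionMatching K f (.inr (.inl i) : InapxEdge m G) then 1 else 0) =
      2 * m - #K := by
    have : univ.filter (fun i => InReductionMatching K f (.inr (.inl i) : InapxEdge m G)) =
        (K.image Prod.snd)ᶜ := by
      ext i; simp [InReductionMatching]
    rw [sum_boole, Nat.cast_id, this, card_compl, hK.card_image_snd, Fintype.card_fin]
  have hU : (∑ i, ∑ j, if InReductionMatching K f (.inr (.inr (.inl (i, j))) : InapxEdge m G)
      then 1 else 0) = 2 * m - #K := by
    trans ∑ i, if i ∈ (K.image Prod.fst)ᶜ then 1 else 0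
    · refine sum_congr rfl fun i _ => ?_
      by_cases hi : i ∈ (K.image Prod.fst)ᶜ <;> simp [InReductionMatching, hi]
    · rw [sum_boole, Nat.cast_id, filter_mem_eq_inter, univ_inter, card_compl,
        hK.card_image_fst, Fintype.card_fin]
  have hZ : ∑ j, ((if InReductionMatching K f (.inr (.inr (.inr (.inl j))) : InapxEdge m G)
      then 1 else 0) + if InReductionMatching K f (.inr (.inr (.inr (.inr j))) : InapxEdge m G)
      then 1 else 0) = m := by
    trans ∑ _ : Fin m, 1
    · refine sum_congr rfl fun j _ => ?_
      by_cases hj : j ∈ univ.map f <;> simp only [InReductionMatching, hj] <;> simp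
    · simp
  rw [reductionMatching, card_filter]
  simp only [Fintype.sum_sum_type, Fintype.sum_prod_type]
  rw [← sum_add_distrib, hG, hW, hU, hZ]
  omega

theorem valU_reductionMatching_u (hK : IsMaximalMatchingOf G K) (i : Fin (2 * m)) :
    (inapx m G).valU (.inl i) ((inapx m G).mU (reductionMatching G K f) (.inl i)) =
      if i ∈ K.image Prod.fst then 2 else 1 := by
  have hM := isMatching_reductionMatching (f := f) hK
  split_ifs with hi
  · obtain ⟨p, hp, rfl⟩ := mem_image.1 hi
    have he : (.inl ⟨p, hK.1 hp⟩ : InapxEdge m G) ∈ reductionMatching G K f :=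
      mem_reductionMatching.2 hp
    exact (hM.valU_mU_src he).trans (by simp [inapx])
  · have he : (.inr (.inr (.inl (i, f ⟨i, mem_compl.2 hi⟩))) : InapxEdge m G) ∈
        reductionMatching G K f :=
      mem_reductionMatching.2 ⟨mem_compl.2 hi, rfl⟩
    exact (hM.valU_mU_src he).trans (by simp [inapx])

theorem valU_reductionMatching_w' (hK : IsMaximalMatchingOf G K) (i : Fin (2 * m)) :
    (inapx m G).valU (.inr (.inl i)) ((inapx m G).mU (reductionMatching G K f) (.inr (.inl i))) =
      if i ∈ K.image Prod.snd then 0 else 1 := by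
  split_ifs with hi
  · rw [mU_eq_none_iff.2, valU_none]
    rintro (q | i' | ⟨i', j'⟩ | j' | j') he h <;> simp [inapx] at h
    subst h
    exact mem_reductionMatching.1 he hi
  · have he : (.inr (.inl i) : InapxEdge m G) ∈ reductionMatching G K f :=
      mem_reductionMatching.2 hi
    exact ((isMatching_reductionMatching hK).valU_mU_src he).trans (by simp [inapx])

theorem valU_reductionMatching_z (hK : IsMaximalMatchingOf G K) (j : Fin m) :
    (inapx m G).valU (.inr (.inr j)) ((inapx m G).mU (reductionMatching G K f) (.inr (.inr j))) =
      if j ∈ univ.map f then 1 else 2 := by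
  have hM := isMatching_reductionMatching (f := f) hK
  split_ifs with hj
  · have he : (.inr (.inr (.inr (.inr j))) : InapxEdge m G) ∈ reductionMatching G K f :=
      mem_reductionMatching.2 hj
    exact (hM.valU_mU_src he).trans (by simp [inapx])
  · have he : (.inr (.inr (.inr (.inl j))) : InapxEdge m G) ∈ reductionMatching G K f :=
      mem_reductionMatching.2 hj
    exact (hM.valU_mU_src he).trans (by simp [inapx])

theorem valW_reductionMatching_w (hK : IsMaximalMatchingOf G K) (i : Fin (2 * m)) :
    (inapx m G).valW (.inl i) ((inapx m G).mW (reductionMatching G K f) (.inl i)) =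
      if i ∈ K.image Prod.snd then 2 else 1 := by
  have hM := isMatching_reductionMatching (f := f) hK
  split_ifs with hi
  · obtain ⟨p, hp, rfl⟩ := mem_image.1 hi
    have he : (.inl ⟨p, hK.1 hp⟩ : InapxEdge m G) ∈ reductionMatching G K f :=
      mem_reductionMatching.2 hp
    exact (hM.valW_mW_dst he).trans (by simp [inapx])
  · have he : (.inr (.inl i) : InapxEdge m G) ∈ reductionMatching G K f :=
      mem_reductionMatching.2 hi
    exact (hM.valW_mW_dst he).trans (by simp [inapx])

theorem valW_reductionMatching_u' (hK : IsMaximalMatchingOf G K) (j : Fin m) :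
    (inapx m G).valW (.inr (.inl j)) ((inapx m G).mW (reductionMatching G K f) (.inr (.inl j))) =
      if j ∈ univ.map f then 1 else 2 := by
  have hM := isMatching_reductionMatching (f := f) hK
  split_ifs with hj
  · obtain ⟨⟨i, hi⟩, -, rfl⟩ := mem_map.1 hj
    have he : (.inr (.inr (.inl (i, f ⟨i, hi⟩))) : InapxEdge m G) ∈
        reductionMatching G K f :=
      mem_reductionMatching.2 ⟨hi, rfl⟩
    exact (hM.valW_mW_dst he).trans (by simp [inapx])
  · have he : (.inr (.inr (.inr (.inl j))) : InapxEdge m G) ∈ reductionMatching G K f :=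
      mem_reductionMatching.2 hj
    exact (hM.valW_mW_dst he).trans (by simp [inapx])

theorem valW_reductionMatching_z' (hK : IsMaximalMatchingOf G K) (j : Fin m) :
    (inapx m G).valW (.inr (.inr j)) ((inapx m G).mW (reductionMatching G K f) (.inr (.inr j))) =
      if j ∈ univ.map f then 1 else 0 := by
  split_ifs with hj
  · have he : (.inr (.inr (.inr (.inr j))) : InapxEdge m G) ∈ reductionMatching G K f :=
      mem_reductionMatching.2 hj
    exact ((isMatching_reductionMatching hK).valW_mW_dst he).trans (by simp [inapx])
  · rw [mW_eq_none_iff.2, valW_none]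
    rintro (q | i' | ⟨i', j'⟩ | j' | j') he h <;> simp [inapx] at h
    subst h
    exact hj (mem_reductionMatching.1 he)

def reductionDualU (K : Finset (Fin (2 * m) × Fin (2 * m)))
    (f : ↥(K.image Prod.fst)ᶜ ↪ Fin m) : Fin (2 * m) ⊕ Fin (2 * m) ⊕ Fin m → ℤ
  | .inl _ => 1
  | .inr (.inl i) => if i ∈ K.image Prod.snd then 0 else 1
  | .inr (.inr j) => if j ∈ univ.map f then -1 else 0

def reductionDualW (K : Finset (Fin (2 * m) × Fin (2 * m)))
    (f : ↥(K.image Prod.fst)ᶜ ↪ Fin m) : Fin (2 * m) ⊕ Fin m ⊕ Fin m → ℤ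
  | .inl _ => -1
  | .inr (.inl j) => if j ∈ univ.map f then -1 else 0
  | .inr (.inr j) => if j ∈ univ.map f then 1 else 0

theorem sum_reductionDual (hK : IsMaximalMatchingOf G K) :
    ∑ u, reductionDualU K f u + ∑ w, reductionDualW K f w = 0 := by
  have hB : #(univ.map f) = 2 * m - #K := by
    rw [card_map, card_univ, Fintype.card_coe, card_compl, hK.card_image_fst, Fintype.card_fin]
  have hWc : #(K.image Prod.snd)ᶜ = 2 * m - #K := by
    rw [card_compl, hK.card_image_snd, Fintype.card_fin]
  simp only [Fintype.sum_sum_type, reductionDualU, reductionDualW, sum_ite, sum_const,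
    filter_mem_eq_inter, filter_not, univ_inter, ← compl_eq_univ_sdiff, smul_zero, card_univ,
    Fintype.card_fin, hB, hWc, nsmul_eq_mul]
  ring

theorem reductionDualU_le (hK : IsMaximalMatchingOf G K)
    (u : Fin (2 * m) ⊕ Fin (2 * m) ⊕ Fin m) :
    reductionDualU K f u ≤ (inapx m G).wVoteVsU (reductionMatching G K f) u none := by
  refine le_trans ?_ (ite_pos_le_wVoteVsU_none ?_) <;>
  rcases u with i | i | j <;>
  simp only [valU_reductionMatching_u hK, valU_reductionMatching_w' hK,
    valU_reductionMatching_z hK, reductionDualU] <;> split_ifs <;> norm_num at *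

theorem reductionDualW_le (hK : IsMaximalMatchingOf G K) (w : Fin (2 * m) ⊕ Fin m ⊕ Fin m) :
    reductionDualW K f w ≤ (inapx m G).wVoteVsW (reductionMatching G K f) w none := by
  refine le_trans ?_ (ite_pos_le_wVoteVsW_none ?_) <;>
  rcases w with i | j | j <;>
  simp only [valW_reductionMatching_w hK, valW_reductionMatching_u' hK,
    valW_reductionMatching_z' hK, reductionDualW] <;> split_ifs <;> norm_num at *

theorem reductionDual_nonpos_of_mem {e : InapxEdge m G} (he : e ∈ reductionMatching G K f) :
    reductionDualU K f ((inapx m G).src e) + reductionDualW K f ((inapx m G).dst e) ≤ 0 := by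
  rw [mem_reductionMatching] at he
  rcases e with q | i | ⟨i, j⟩ | j | j <;> simp only [InReductionMatching] at he <;>
    dsimp only [inapx, reductionDualU, reductionDualW]
  · norm_num
  · simp [he]
  · obtain ⟨h, rfl⟩ := he
    simp
  · rw [if_neg he]; norm_num
  · rw [if_pos he, if_pos he]; norm_num

theorem reductionDual_le_of_not_mem (hK : IsMaximalMatchingOf G K) {e : InapxEdge m G}
    (he : e ∉ reductionMatching G K f) :
    reductionDualU K f ((inapx m G).src e) + reductionDualW K f ((inapx m G).dst e) ≤
      (if (inapx m G).valU ((inapx m G).src e)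
          ((inapx m G).mU (reductionMatching G K f) ((inapx m G).src e)) <
          (inapx m G).pU ((inapx m G).src e) e then -1 else 1) +
        (if (inapx m G).valW ((inapx m G).dst e)
          ((inapx m G).mW (reductionMatching G K f) ((inapx m G).dst e)) <
          (inapx m G).pW ((inapx m G).dst e) e then -1 else 1) := by
  rw [mem_reductionMatching] at he
  generalize hu : (inapx m G).src e = u
  generalize hw : (inapx m G).dst e = w
  rcases e with q | i | ⟨i, j⟩ | j | j <;> simp only [InReductionMatching] at he <;>
    dsimp only [inapx] at hu hw <;> subst hu hw
  all_goals
    simp only [valU_reductionMatching_u hK, valU_reductionMatching_w' hK,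
      valU_reductionMatching_z hK, valW_reductionMatching_w hK, valW_reductionMatching_u' hK,
      valW_reductionMatching_z' hK]
    simp only [inapx, reductionDualU, reductionDualW, ↓reduceIte]
  · obtain ⟨p, hp, hq⟩ := hK.2.2 q.1 q.2
    have hcov : q.1.1 ∈ K.image Prod.fst ∨ q.1.2 ∈ K.image Prod.snd :=
      hq.imp (fun h : p.1 = q.1.1 => h ▸ mem_image_of_mem Prod.fst hp)
        (fun h : p.2 = q.1.2 => h ▸ mem_image_of_mem Prod.snd hp)
    rcases hcov with hcov | hcov <;> simp only [hcov, ↓reduceIte] <;> split_ifs <;> norm_num at *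
  all_goals split_ifs <;> norm_num at *

theorem weaklyPopular_reductionMatching (hK : IsMaximalMatchingOf G K) :
    (inapx m G).WeaklyPopular (reductionMatching G K f) :=
  (isMatching_reductionMatching hK).weaklyPopular_of_certificate _ _ (reductionDualU_le hK)
    (reductionDualW_le hK) (fun _ => reductionDual_nonpos_of_mem)
    (fun _ => reductionDual_le_of_not_mem hK) (sum_reductionDual hK).ge

end PrefInst

open PrefInst in
/-- If `G` (bipartite, `|U|=|W|=n=2m` even) has a maximal matching
of size `k ≥ n/2 = m`, then the reduction instance `I'` has a weakly popular
matching of size at least `(5/2)n − k = 5m − k`. -/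
theorem inapx_maximal_gives_weakly_popular
    (m k : ℕ) (G : Finset (Fin (2 * m) × Fin (2 * m)))
    (K : Finset (Fin (2 * m) × Fin (2 * m)))
    (hK : IsMaximalMatchingOf G K) (hKcard : K.card = k) (hk : m ≤ k) :
    ∃ M', (inapx m G).IsMatching M' ∧ (inapx m G).WeaklyPopular M' ∧
      5 * m - k ≤ M'.card := by
  have hexposed : Fintype.card ↥(K.image Prod.fst)ᶜ ≤ Fintype.card (Fin m) := by
    rw [Fintype.card_coe, card_compl, hK.card_image_fst, Fintype.card_fin, Fintype.card_fin]
    omega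
  obtain ⟨f⟩ := Function.Embedding.nonempty_of_card_le hexposed
  refine ⟨reductionMatching G K f, isMatching_reductionMatching hK,
    weaklyPopular_reductionMatching hK, ?_⟩
  rw [card_reductionMatching hK, hKcard]
end
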